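/- Let a_n ∈ C̃ for each n ∈ ℕ and set R = 1/limsup_{n→∞} ‖a_n‖^{1/n} ∈ [0,+∞]. Then the series Σ_{n=0}^∞ a_n z̃^n converges in the sharp topology for every z̃ ∈ C̃ with ‖z̃‖ < R, and does not converge for any invertible z̃ ∈ C̃ with ‖z̃^{-1}‖ < 1/R. Moreover, the convergence is uniform on every ball {z̃ ∈ C̃ : ‖z̃‖ ≤ r} with r < R. -/

import Mathlib

open Real Set Metric MeasureTheory Filter

noncomputable section

/-- `P ε` holds for all sufficiently small `ε ∈ (0,1)`. -/
def EvSmall (P : ℝ → Prop) : Prop :=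
  ∃ ε₀ : ℝ, 0 < ε₀ ∧ ε₀ < 1 ∧ ∀ ε : ℝ, 0 < ε → ε ≤ ε₀ → P ε

/-- A net `(u_ε)` with values in a seminormed group is moderate. -/
def Moderate {E : Type*} [SeminormedAddGroup E] (u : ℝ → E) : Prop :=
  ∃ N : ℕ, EvSmall fun ε => ‖u ε‖ ≤ ε ^ (-(N : ℝ))

/-- A net `(u_ε)` is negligible. -/
def Negligible {E : Type*} [SeminormedAddGroup E] (u : ℝ → E) : Prop :=
  ∀ m : ℕ, EvSmall fun ε => ‖u ε‖ ≤ ε ^ (m : ℝ)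

/-- Two nets represent the same generalized point. -/
def EqvNet {E : Type*} [SeminormedAddGroup E] (x y : ℝ → E) : Prop :=
  Negligible fun ε => x ε - y ε

/-- The set of generalized points of `Ẽ` (modelled as the moderate nets). -/
def GenPt (E : Type*) [SeminormedAddGroup E] : Set (ℝ → E) := {x | Moderate x}

/-- `x` is a representative of some generalized point belonging to `A`. -/
def IsReprOfPointOf {E : Type*} [SeminormedAddGroup E] (A : Set (ℝ → E)) (x : ℝ → E) : Prop :=
  Moderate x ∧ ∃ a ∈ A, EqvNet x a

/-- The sharp norm `e^{-v(x)}` of a (moderate) net. -/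
noncomputable def sharpNorm {E : Type*} [SeminormedAddGroup E] (x : ℝ → E) : ℝ :=
  sInf {r : ℝ | ∃ b : ℝ, r = Real.exp (-b) ∧ EvSmall fun ε => ‖x ε‖ ≤ ε ^ b}

/-- `A` is open for the sharp topology (as a set of generalized points). -/
def SharpOpen {E : Type*} [SeminormedAddGroup E] (A : Set (ℝ → E)) : Prop :=
  (∀ x ∈ A, Moderate x) ∧
  ∀ x ∈ A, ∃ r > 0, ∀ y : ℝ → E, Moderate y →
    sharpNorm (fun ε => y ε - x ε) < r → y ∈ A

/-- `B` is a sharp neighbourhood of `A`. -/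
def IsSharpNbhdOf {E : Type*} [SeminormedAddGroup E] (B A : Set (ℝ → E)) : Prop :=
  A ⊆ B ∧ ∀ x ∈ A, ∃ r > 0, ∀ y : ℝ → E, Moderate y →
    sharpNorm (fun ε => y ε - x ε) < r → y ∈ B

/-- The internal set with representative `(Aε)`. -/
def InternalSet {E : Type*} [SeminormedAddGroup E] (Aε : ℝ → Set E) : Set (ℝ → E) :=
  {x | Moderate x ∧ ∃ y : ℝ → E, EqvNet x y ∧ EvSmall fun ε => y ε ∈ Aε ε}

/-- `(Aε)` is a sharply bounded representative. -/
def SharplyBddRep {E : Type*} [SeminormedAddGroup E] (Aε : ℝ → Set E) : Prop :=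
  ∃ M : ℕ, EvSmall fun ε => ∀ x ∈ Aε ε, ‖x‖ ≤ ε ^ (-(M : ℝ))

/-- A set of generalized points is sharply bounded. -/
def SharplyBddSet {E : Type*} [SeminormedAddGroup E] (A : Set (ℝ → E)) : Prop :=
  ∃ C : ℝ, ∀ x ∈ A, sharpNorm x ≤ C

/-- The interleaved closure of a set of generalized points. -/
def interleaved {E : Type*} [SeminormedAddGroup E] (A : Set (ℝ → E)) : Set (ℝ → E) :=
  {x | ∃ (m : ℕ) (S : Fin m → Set ℝ) (y : Fin m → ℝ → E),
    (∀ ε ∈ Set.Ioo (0:ℝ) 1, ∃! j, ε ∈ S j) ∧ (∀ j, y j ∈ A) ∧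
    ∀ ε ∈ Set.Ioo (0:ℝ) 1, ∀ j, ε ∈ S j → x ε = y j ε}

/-- A net of smooth functions (smooth for each ε ∈ (0,1)). -/
def SmoothNet {V : Type*} [NormedAddCommGroup V] [NormedSpace ℝ V] (u : ℝ → V → ℂ) : Prop :=
  ∀ ε : ℝ, 0 < ε → ε < 1 → ContDiff ℝ (⊤ : ℕ∞) (u ε)

/-- The nets belonging to `E_M(A)` : all derivatives are moderate along the points of `A`. -/
def EMod {V : Type*} [NormedAddCommGroup V] [NormedSpace ℝ V]
    (A : Set (ℝ → V)) (u : ℝ → V → ℂ) : Prop :=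
  SmoothNet u ∧ ∀ (n : ℕ) (x : ℝ → V), IsReprOfPointOf A x →
    Moderate fun ε => iteratedFDeriv ℝ n (u ε) (x ε)

/-- The nets belonging to `N(A)` : all derivatives are negligible along the points of `A`. -/
def NNeg {V : Type*} [NormedAddCommGroup V] [NormedSpace ℝ V]
    (A : Set (ℝ → V)) (u : ℝ → V → ℂ) : Prop :=
  SmoothNet u ∧ ∀ (n : ℕ) (x : ℝ → V), IsReprOfPointOf A x →
    Negligible fun ε => iteratedFDeriv ℝ n (u ε) (x ε)

/-- `u` and `v` define the same element of `G̃(A)`. -/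
def GEq {V : Type*} [NormedAddCommGroup V] [NormedSpace ℝ V]
    (A : Set (ℝ → V)) (u v : ℝ → V → ℂ) : Prop :=
  NNeg A fun ε z => u ε z - v ε z

/-- `x̃ ≤ ỹ` in `R̃` (for the given representatives). -/
def RleNet (x y : ℝ → ℝ) : Prop := ∀ m : ℕ, EvSmall fun ε => x ε ≤ y ε + ε ^ (m : ℝ)

/-- `x̃ ≫ 0` in `R̃`. -/
def StrPosNet (x : ℝ → ℝ) : Prop := ∃ m : ℕ, EvSmall fun ε => ε ^ (m : ℝ) ≤ x ε

/-- `x̃ ≪ ỹ` in `R̃`. -/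
def RltlNet (x y : ℝ → ℝ) : Prop := StrPosNet fun ε => y ε - x ε

/-- The operator `∂̄ = ½(∂ₓ + i ∂_y)` on smooth functions `ℂ → ℂ`. -/
def dbar (u : ℂ → ℂ) (z : ℂ) : ℂ :=
  (fderiv ℝ u z 1 + Complex.I * fderiv ℝ u z Complex.I) / 2

/-- The iterated derivative `D^k u = ∂ₓ^k u`. -/
def Dpow : ℕ → (ℂ → ℂ) → ℂ → ℂ
  | 0, u => u
  | (k+1), u => Dpow k fun z => fderiv ℝ u z 1

/-- `u ∈ G̃_H(A)` : generalized holomorphic functions on `A ⊆ C̃`. -/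
def GHol (A : Set (ℝ → ℂ)) (u : ℝ → ℂ → ℂ) : Prop :=
  EMod A u ∧ NNeg A fun ε => dbar (u ε)

/-- A continuous, piecewise `C¹` function on `[0,1]` (with its partition). -/
structure PwC1Path where
  toFun : ℝ → ℂ
  n : ℕ
  pt : Fin (n + 1) → ℝ
  mono : Monotone pt
  first : pt 0 = 0
  last : pt (Fin.last n) = 1
  cont : ContinuousOn toFun (Set.Icc 0 1)
  piece : ∀ i : Fin n, ContDiffOn ℝ 1 toFun (Set.Icc (pt i.castSucc) (pt i.succ))

/-- A net of piecewise `C¹` paths which is moderate for the `C¹_pw` norm. -/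
def PathModerate (γ : ℝ → PwC1Path) : Prop :=
  (∃ N : ℕ, EvSmall fun ε => ∀ t ∈ Set.Icc (0:ℝ) 1, ‖(γ ε).toFun t‖ ≤ ε ^ (-(N:ℝ))) ∧
  (∃ N : ℕ, EvSmall fun ε => ∀ᵐ t ∂(volume.restrict (Set.Icc (0:ℝ) 1)),
      ‖deriv (γ ε).toFun t‖ ≤ ε ^ (-(N:ℝ)))

/-- Two nets of paths represent the same generalized path
(their difference is negligible for the `C¹_pw` norm). -/
def PathEqv (γ γ' : ℝ → PwC1Path) : Prop :=
  ∀ m : ℕ, EvSmall fun ε =>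
    (∀ t ∈ Set.Icc (0:ℝ) 1, ‖(γ ε).toFun t - (γ' ε).toFun t‖ ≤ ε ^ (m:ℝ)) ∧
    (∀ᵐ t ∂(volume.restrict (Set.Icc (0:ℝ) 1)),
      ‖deriv (γ ε).toFun t - deriv (γ' ε).toFun t‖ ≤ ε ^ (m:ℝ))

/-- `γ` is a (generalized) path in `A ⊆ C̃`. -/
def PathIn (A : Set (ℝ → ℂ)) (γ : ℝ → PwC1Path) : Prop :=
  PathModerate γ ∧ ∀ t : ℝ → ℝ, (∀ ε, t ε ∈ Set.Icc (0:ℝ) 1) →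
    IsReprOfPointOf A fun ε => (γ ε).toFun (t ε)

/-- The complex path integral `∫_γ u(z) dz` along a piecewise `C¹` path. -/
noncomputable def pathIntegral (γ : PwC1Path) (u : ℂ → ℂ) : ℂ :=
  ∑ i : Fin γ.n, ∫ t in (γ.pt i.castSucc)..(γ.pt i.succ),
    u (γ.toFun t) * derivWithin γ.toFun (Set.Icc (γ.pt i.castSucc) (γ.pt i.succ)) t

/-- The path is closed: `γ(0) = γ(1)` as generalized points. -/
def ClosedPath (γ : ℝ → PwC1Path) : Prop :=
  Negligible fun ε => (γ ε).toFun 1 - (γ ε).toFun 0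

/-- A continuous, piecewise `C¹` function on `[0,1]²` (with its grid partition). -/
structure PwC1Homotopy where
  toFun : ℝ × ℝ → ℂ
  n : ℕ
  pt : Fin (n + 1) → ℝ
  mono : Monotone pt
  first : pt 0 = 0
  last : pt (Fin.last n) = 1
  cont : ContinuousOn toFun (Set.Icc 0 1 ×ˢ Set.Icc 0 1)
  piece : ∀ i j : Fin n, ContDiffOn ℝ 1 toFun
    (Set.Icc (pt i.castSucc) (pt i.succ) ×ˢ Set.Icc (pt j.castSucc) (pt j.succ))

/-- A moderate net of piecewise `C¹` functions on the square. -/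
def HomotopyModerate (H : ℝ → PwC1Homotopy) : Prop :=
  (∃ N : ℕ, EvSmall fun ε => ∀ p ∈ (Set.Icc (0:ℝ) 1 ×ˢ Set.Icc (0:ℝ) 1),
      ‖(H ε).toFun p‖ ≤ ε ^ (-(N:ℝ))) ∧
  (∃ N : ℕ, EvSmall fun ε =>
      ∀ᵐ p ∂(volume.restrict ((Set.Icc (0:ℝ) 1 ×ˢ Set.Icc (0:ℝ) 1) : Set (ℝ × ℝ))),
      ‖fderiv ℝ (H ε).toFun p‖ ≤ ε ^ (-(N:ℝ)))

/-- `H` is a homotopy in `A` between the closed paths `γ` and `γ'`. -/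
def IsHomotopyBetween (A : Set (ℝ → ℂ)) (γ γ' : ℝ → PwC1Path)
    (H : ℝ → PwC1Homotopy) : Prop :=
  HomotopyModerate H ∧
  (∀ t : ℝ → ℝ, (∀ ε, t ε ∈ Set.Icc (0:ℝ) 1) →
    (Negligible fun ε => (H ε).toFun (t ε, 0) - (γ ε).toFun (t ε)) ∧
    (Negligible fun ε => (H ε).toFun (t ε, 1) - (γ' ε).toFun (t ε))) ∧
  (∀ s : ℝ → ℝ, (∀ ε, s ε ∈ Set.Icc (0:ℝ) 1) →
    Negligible fun ε => (H ε).toFun (0, s ε) - (H ε).toFun (1, s ε)) ∧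
  (∀ t s : ℝ → ℝ, (∀ ε, t ε ∈ Set.Icc (0:ℝ) 1) → (∀ ε, s ε ∈ Set.Icc (0:ℝ) 1) →
    IsReprOfPointOf A fun ε => (H ε).toFun (t ε, s ε))

/-- The radius of convergence `R = 1 / limsup ‖a_n‖^{1/n} ∈ [0,∞]` of a power series with
coefficients in `C̃`. -/
noncomputable def convRadius (a : ℕ → ℝ → ℂ) : ENNReal :=
  (Filter.limsup (fun n => ENNReal.ofReal (sharpNorm (a n) ^ (1 / (n : ℝ)))) Filter.atTop)⁻¹

/-!
The sharp norm is an ultrametric, submultiplicative, and complete for series whose terms have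
sharp norm at most `q ^ n` with `q = exp (-β) < 1`: the sum is built diagonally, adding at each
`ε` only the terms whose asymptotic bound `ε ^ (β n - 1)` is already in force. Inside the radius
the root test gives `‖a_n z^n‖ ≤ ‖a_n‖ r^n ≤ q^n`, uniformly for `‖z‖ ≤ r`. Outside, if `z w = 1`
and `‖w‖ < ρ < limsup ‖a_n‖^{1/n}`, then `ρ^n < ‖a_n‖ ≤ ‖a_n z^n‖ ‖w‖^n` infinitely often, so the
terms `a_n z^n` do not tend to zero.
-/

open Topology

section SharpNorm

variable {E : Type*} [SeminormedAddGroup E] {x y : ℝ → E} {b b' c : ℝ}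

theorem evSmall_iff_eventually (P : ℝ → Prop) : EvSmall P ↔ ∀ᶠ ε in 𝓝[>] (0:ℝ), P ε := by
  constructor
  · rintro ⟨ε₀, hε₀, -, h⟩
    filter_upwards [Ioc_mem_nhdsGT hε₀] with ε hε using h ε hε.1 hε.2
  · intro h
    obtain ⟨u, hu, hsub⟩ := mem_nhdsGT_iff_exists_Ioc_subset.mp h
    exact ⟨min u (1 / 2), lt_min hu (by norm_num), (min_le_right _ _).trans_lt (by norm_num),
      fun ε hε hεu => hsub ⟨hε, hεu.trans (min_le_left _ _)⟩⟩

theorem eventually_mul_rpow_le_rpow (C : ℝ) (h : b' < b) :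
    ∀ᶠ ε in 𝓝[>] (0:ℝ), C * ε ^ b ≤ ε ^ b' := by
  have hsmall : Tendsto (fun ε : ℝ => C * ε ^ (b - b')) (𝓝[>] 0) (𝓝 0) := by
    simpa [Real.zero_rpow (sub_pos.2 h).ne'] using
      ((Real.continuousAt_rpow_const 0 _ (Or.inr (sub_pos.2 h).le)).tendsto.mono_left
        nhdsWithin_le_nhds).const_mul C
  filter_upwards [hsmall.eventually (eventually_le_nhds one_pos), self_mem_nhdsWithin]
    with ε hC (hε : 0 < ε)
  calc C * ε ^ b = C * ε ^ (b - b') * ε ^ b' := by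
        rw [mul_assoc, ← Real.rpow_add hε, sub_add_cancel]
    _ ≤ 1 * ε ^ b' := by gcongr
    _ = ε ^ b' := one_mul _

/-- `b` is admissible in the supremum defining the valuation `v(x)` of the sharp norm. -/
def BoundedByRpow (x : ℝ → E) (b : ℝ) : Prop :=
  ∀ᶠ ε in 𝓝[>] (0:ℝ), ‖x ε‖ ≤ ε ^ b

theorem BoundedByRpow.mono (h : BoundedByRpow x b) (hb : b' ≤ b) : BoundedByRpow x b' := by
  filter_upwards [h, Ioc_mem_nhdsGT one_pos] with ε hε hε1
  exact hε.trans (Real.rpow_le_rpow_of_exponent_ge hε1.1 hε1.2 hb)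

theorem BoundedByRpow.add (hx : BoundedByRpow x b) (hy : BoundedByRpow y b) (hb : b' < b) :
    BoundedByRpow (fun ε => x ε + y ε) b' := by
  filter_upwards [hx, hy, eventually_mul_rpow_le_rpow 2 hb] with ε hxε hyε h2
  calc ‖x ε + y ε‖ ≤ ‖x ε‖ + ‖y ε‖ := norm_add_le _ _
    _ ≤ 2 * ε ^ b := by linarith
    _ ≤ ε ^ b' := h2

theorem moderate_iff_exists_boundedByRpow : Moderate x ↔ ∃ b, BoundedByRpow x b := by
  constructor
  · rintro ⟨N, hN⟩
    exact ⟨-N, (evSmall_iff_eventually _).1 hN⟩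
  · rintro ⟨b, hb⟩
    refine ⟨⌈-b⌉₊, (evSmall_iff_eventually _).2 (hb.mono ?_)⟩
    linarith [Nat.le_ceil (-b)]

theorem negligible_iff_forall_boundedByRpow : Negligible x ↔ ∀ b, BoundedByRpow x b := by
  constructor
  · intro h b
    exact BoundedByRpow.mono ((evSmall_iff_eventually _).1 (h ⌈b⌉₊)) (Nat.le_ceil b)
  · intro h m
    exact (evSmall_iff_eventually _).2 (h m)

theorem Negligible.moderate (h : Negligible x) : Moderate x :=
  moderate_iff_exists_boundedByRpow.2 ⟨0, negligible_iff_forall_boundedByRpow.1 h 0⟩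

theorem sharpNorm_eq_sInf :
    sharpNorm x = sInf {r : ℝ | ∃ b : ℝ, r = Real.exp (-b) ∧ BoundedByRpow x b} := by
  simp only [sharpNorm, evSmall_iff_eventually, BoundedByRpow]

theorem bddBelow_exp_neg_boundedByRpow :
    BddBelow {r : ℝ | ∃ b : ℝ, r = Real.exp (-b) ∧ BoundedByRpow x b} :=
  ⟨0, by rintro _ ⟨b, rfl, -⟩; positivity⟩

theorem sharpNorm_nonneg (x : ℝ → E) : 0 ≤ sharpNorm x := by
  rw [sharpNorm_eq_sInf]
  exact Real.sInf_nonneg (by rintro _ ⟨b, rfl, -⟩; positivity)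

theorem sharpNorm_le_of_boundedByRpow (h : BoundedByRpow x b) : sharpNorm x ≤ Real.exp (-b) := by
  rw [sharpNorm_eq_sInf]
  exact csInf_le bddBelow_exp_neg_boundedByRpow ⟨b, rfl, h⟩

theorem sharpNorm_eq_zero_of_negligible (h : Negligible x) : sharpNorm x = 0 :=
  le_antisymm (ge_of_tendsto Real.tendsto_exp_neg_atTop_nhds_zero (Eventually.of_forall fun b =>
    sharpNorm_le_of_boundedByRpow (negligible_iff_forall_boundedByRpow.1 h b))) (sharpNorm_nonneg x)

theorem sharpNorm_le_of_forall_lt (h : ∀ b' < b, BoundedByRpow x b') :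
    sharpNorm x ≤ Real.exp (-b) := by
  have hexp : Tendsto (fun b' => Real.exp (-b')) (𝓝[<] b) (𝓝 (Real.exp (-b))) :=
    (Real.continuous_exp.comp continuous_neg).continuousAt.tendsto.mono_left nhdsWithin_le_nhds
  exact ge_of_tendsto hexp (eventually_nhdsWithin_of_forall fun b' hb' =>
    sharpNorm_le_of_boundedByRpow (h b' hb'))

theorem exists_boundedByRpow_of_sharpNorm_lt (hx : Moderate x) (h : sharpNorm x < c) :
    ∃ b, Real.exp (-b) < c ∧ BoundedByRpow x b := by
  obtain ⟨b₀, hb₀⟩ := moderate_iff_exists_boundedByRpow.1 hx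
  rw [sharpNorm_eq_sInf] at h
  obtain ⟨_, ⟨b, rfl, hb⟩, hbc⟩ :=
    (csInf_lt_iff bddBelow_exp_neg_boundedByRpow ⟨_, b₀, rfl, hb₀⟩).1 h
  exact ⟨b, hbc, hb⟩

theorem boundedByRpow_of_sharpNorm_le (hx : Moderate x) (h : sharpNorm x ≤ Real.exp (-b))
    (hb : b' < b) : BoundedByRpow x b' := by
  obtain ⟨b'', hlt, hb''⟩ := exists_boundedByRpow_of_sharpNorm_lt hx
    (h.trans_lt (Real.exp_lt_exp.2 (neg_lt_neg hb)))
  exact hb''.mono (by linarith [Real.exp_lt_exp.1 hlt])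

theorem Negligible.neg (h : Negligible x) : Negligible fun ε => -x ε := by
  simpa only [Negligible, norm_neg] using h

theorem Moderate.neg (hx : Moderate x) : Moderate fun ε => -x ε := by
  simpa only [Moderate, norm_neg] using hx

theorem sharpNorm_neg (x : ℝ → E) : sharpNorm (fun ε => -x ε) = sharpNorm x := by
  simp only [sharpNorm, norm_neg]

theorem Moderate.add (hx : Moderate x) (hy : Moderate y) : Moderate fun ε => x ε + y ε := by
  obtain ⟨b₁, h₁⟩ := moderate_iff_exists_boundedByRpow.1 hx
  obtain ⟨b₂, h₂⟩ := moderate_iff_exists_boundedByRpow.1 hy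
  exact moderate_iff_exists_boundedByRpow.2 ⟨_, (h₁.mono (min_le_left b₁ b₂)).add
    (h₂.mono (min_le_right b₁ b₂)) (sub_one_lt _)⟩

theorem Moderate.sub (hx : Moderate x) (hy : Moderate y) : Moderate fun ε => x ε - y ε := by
  simpa only [sub_eq_add_neg] using hx.add hy.neg

theorem sharpNorm_add_le (hx : Moderate x) (hy : Moderate y) :
    sharpNorm (fun ε => x ε + y ε) ≤ max (sharpNorm x) (sharpNorm y) := by
  refine le_of_forall_gt_imp_ge_of_dense fun c hc => ?_
  obtain ⟨b₁, hb₁c, h₁⟩ := exists_boundedByRpow_of_sharpNorm_lt hx ((le_max_left _ _).trans_lt hc)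
  obtain ⟨b₂, hb₂c, h₂⟩ := exists_boundedByRpow_of_sharpNorm_lt hy ((le_max_right _ _).trans_lt hc)
  have hexp : Real.exp (-min b₁ b₂) < c := by
    rcases min_choice b₁ b₂ with h | h <;> rwa [h]
  refine (sharpNorm_le_of_forall_lt fun b' hb' => ?_).trans hexp.le
  exact (h₁.mono (min_le_left _ _)).add (h₂.mono (min_le_right _ _)) hb'

theorem sharpNorm_sub_le (hx : Moderate x) (hy : Moderate y) :
    sharpNorm (fun ε => x ε - y ε) ≤ max (sharpNorm x) (sharpNorm y) := by
  simpa only [sub_eq_add_neg, sharpNorm_neg] using sharpNorm_add_le hx hy.neg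

theorem sharpNorm_le_of_negligible_sub (hy : Moderate y) (h : Negligible fun ε => x ε - y ε) :
    sharpNorm x ≤ sharpNorm y := by
  have hsum := sharpNorm_add_le h.moderate hy
  rw [sharpNorm_eq_zero_of_negligible h, max_eq_right (sharpNorm_nonneg y)] at hsum
  simpa only [sub_add_cancel] using hsum

end SharpNorm

section Sums

variable {E : Type*} [SeminormedAddCommGroup E]

theorem moderate_zero : Moderate fun _ : ℝ => (0 : E) :=
  ⟨0, (evSmall_iff_eventually _).2 (Eventually.of_forall fun ε => by simp)⟩

theorem Moderate.finset_sum {ι : Type*} {s : Finset ι} {u : ι → ℝ → E}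
    (h : ∀ i ∈ s, Moderate (u i)) : Moderate fun ε => ∑ i ∈ s, u i ε := by
  rw [← Finset.sum_fn]
  exact Finset.sum_induction u Moderate (fun _ _ => Moderate.add) moderate_zero h

def SharpHasSum (u : ℕ → ℝ → E) (s : ℝ → E) : Prop :=
  Tendsto (fun m => sharpNorm fun ε => (∑ n ∈ Finset.range m, u n ε) - s ε) atTop (𝓝 0)

theorem SharpHasSum.tendsto_sharpNorm_zero {u : ℕ → ℝ → E} {s : ℝ → E} (h : SharpHasSum u s)
    (hu : ∀ n, Moderate (u n)) (hs : Moderate s) :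
    Tendsto (fun n => sharpNorm (u n)) atTop (𝓝 0) := by
  have hpartial : ∀ m, Moderate fun ε => (∑ n ∈ Finset.range m, u n ε) - s ε :=
    fun m => (Moderate.finset_sum fun n _ => hu n).sub hs
  refine squeeze_zero (fun n => sharpNorm_nonneg _) (fun n => ?_)
    (by simpa using (h.comp (tendsto_add_atTop_nat 1)).max h)
  have hterm : u n = fun ε => ((∑ k ∈ Finset.range (n + 1), u k ε) - s ε)
      - ((∑ k ∈ Finset.range n, u k ε) - s ε) := by
    funext ε
    rw [Finset.sum_range_succ]
    abel
  rw [hterm]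
  exact sharpNorm_sub_le (hpartial _) (hpartial _)

end Sums

section Ring

variable {R : Type*} [SeminormedRing R] {x y : ℝ → R} {b₁ b₂ : ℝ}

theorem BoundedByRpow.mul (hx : BoundedByRpow x b₁) (hy : BoundedByRpow y b₂) :
    BoundedByRpow (fun ε => x ε * y ε) (b₁ + b₂) := by
  filter_upwards [hx, hy, self_mem_nhdsWithin] with ε hxε hyε (hε : 0 < ε)
  rw [Real.rpow_add hε]
  exact (norm_mul_le _ _).trans (mul_le_mul hxε hyε (norm_nonneg _) (by positivity))

theorem Moderate.mul (hx : Moderate x) (hy : Moderate y) : Moderate fun ε => x ε * y ε := by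
  obtain ⟨b₁, h₁⟩ := moderate_iff_exists_boundedByRpow.1 hx
  obtain ⟨b₂, h₂⟩ := moderate_iff_exists_boundedByRpow.1 hy
  exact moderate_iff_exists_boundedByRpow.2 ⟨_, h₁.mul h₂⟩

theorem Moderate.mul_negligible (hx : Moderate x) (hy : Negligible y) :
    Negligible fun ε => x ε * y ε := by
  obtain ⟨b₁, h₁⟩ := moderate_iff_exists_boundedByRpow.1 hx
  rw [negligible_iff_forall_boundedByRpow] at hy ⊢
  intro b
  simpa using h₁.mul (hy (b - b₁))

theorem sharpNorm_mul_le (hx : Moderate x) (hy : Moderate y) :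
    sharpNorm (fun ε => x ε * y ε) ≤ sharpNorm x * sharpNorm y := by
  refine le_mul_of_forall_lt₀ fun c₁ hc₁ c₂ hc₂ => ?_
  obtain ⟨b₁, hb₁, h₁⟩ := exists_boundedByRpow_of_sharpNorm_lt hx hc₁
  obtain ⟨b₂, hb₂, h₂⟩ := exists_boundedByRpow_of_sharpNorm_lt hy hc₂
  calc sharpNorm (fun ε => x ε * y ε) ≤ Real.exp (-b₁) * Real.exp (-b₂) := by
        rw [← Real.exp_add, ← neg_add]
        exact sharpNorm_le_of_boundedByRpow (h₁.mul h₂)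
    _ ≤ c₁ * c₂ := mul_le_mul hb₁.le hb₂.le (by positivity) (hb₁.trans' (by positivity)).le

theorem Moderate.pow [NormOneClass R] (hx : Moderate x) (n : ℕ) :
    Moderate fun ε => x ε ^ n := by
  induction n with
  | zero => exact ⟨0, (evSmall_iff_eventually _).2 (Eventually.of_forall fun ε => by simp)⟩
  | succ n ih => simpa only [pow_succ] using ih.mul hx

theorem sharpNorm_pow_le [NormOneClass R] (hx : Moderate x) (n : ℕ) :
    sharpNorm (fun ε => x ε ^ n) ≤ sharpNorm x ^ n := by
  induction n with
  | zero =>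
    have hone : BoundedByRpow (fun _ => (1 : R)) 0 := Eventually.of_forall fun ε => by simp
    simpa using sharpNorm_le_of_boundedByRpow hone
  | succ n ih =>
    simp only [pow_succ]
    exact (sharpNorm_mul_le (hx.pow n) hx).trans
      (mul_le_mul_of_nonneg_right ih (sharpNorm_nonneg x))

end Ring

theorem sharpNorm_le_sharpNorm_mul_pow_mul_pow {R : Type*} [SeminormedCommRing R] [NormOneClass R]
    {u x y : ℝ → R} (hu : Moderate u) (hx : Moderate x) (hy : Moderate y)
    (hxy : Negligible fun ε => x ε * y ε - 1) (n : ℕ) :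
    sharpNorm u ≤ sharpNorm (fun ε => u ε * x ε ^ n) * sharpNorm y ^ n := by
  have hpow : Negligible fun ε => (x ε * y ε) ^ n - 1 := by
    simpa only [geom_sum_mul] using
      (Moderate.finset_sum (s := Finset.range n) fun i _ => (hx.mul hy).pow i).mul_negligible hxy
  have hdiff : Negligible fun ε => u ε - u ε * x ε ^ n * y ε ^ n := by
    convert (hu.mul_negligible hpow).neg using 2 with ε
    ring
  calc sharpNorm u ≤ sharpNorm (fun ε => u ε * x ε ^ n * y ε ^ n) :=
        sharpNorm_le_of_negligible_sub ((hu.mul (hx.pow n)).mul (hy.pow n)) hdiff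
    _ ≤ sharpNorm (fun ε => u ε * x ε ^ n) * sharpNorm (fun ε => y ε ^ n) :=
        sharpNorm_mul_le (hu.mul (hx.pow n)) (hy.pow n)
    _ ≤ sharpNorm (fun ε => u ε * x ε ^ n) * sharpNorm y ^ n :=
        mul_le_mul_of_nonneg_left (sharpNorm_pow_le hy n) (sharpNorm_nonneg _)

theorem exists_tendsto_atTop_forall_lt_of_eventually (P : ℕ → ℝ → Prop)
    (h : ∀ n, ∀ᶠ ε in 𝓝[>] (0:ℝ), P n ε) :
    ∃ M : ℝ → ℕ, Tendsto M (𝓝[>] 0) atTop ∧ ∀ ε, ∀ n < M ε, P n ε := by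
  classical
  refine ⟨fun ε => Nat.findGreatest (fun k => ∀ n < k, P n ε) ⌊ε⁻¹⌋₊, ?_, fun ε =>
    Nat.findGreatest_spec (P := fun k => ∀ n < k, P n ε) (Nat.zero_le _) fun n hn =>
      absurd hn (Nat.not_lt_zero n)⟩
  refine tendsto_atTop.2 fun K => ?_
  filter_upwards [(tendsto_nat_floor_atTop.comp tendsto_inv_nhdsGT_zero).eventually_ge_atTop K,
    (eventually_all_finset (Finset.range K)).2 fun n _ => h n] with ε hK hP
  exact Nat.le_findGreatest hK fun n hn => hP n (Finset.mem_range.2 hn)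

theorem sum_Ico_pow_le_two_mul {r : ℝ} (h₀ : 0 ≤ r) (h : r ≤ 1 / 2) (m K : ℕ) :
    ∑ n ∈ Finset.Ico m K, r ^ n ≤ 2 * r ^ m := by
  refine (geom_sum_Ico_le_of_lt_one h₀ (by linarith)).trans ?_
  rw [div_le_iff₀ (by linarith)]
  nlinarith [pow_nonneg h₀ m]

/-- Completeness of the sharp norm, for series with geometrically decreasing terms. -/
theorem exists_moderate_sharpNorm_sum_sub_le {E : Type*} [SeminormedAddCommGroup E]
    {u : ℕ → ℝ → E} (hu : ∀ n, Moderate (u n)) {q : ℝ} (hq₀ : 0 < q) (hq₁ : q < 1) {N : ℕ}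
    (hN : ∀ n ≥ N, sharpNorm (u n) ≤ q ^ n) :
    ∃ s, Moderate s ∧ ∀ m ≥ N,
      sharpNorm (fun ε => (∑ n ∈ Finset.range m, u n ε) - s ε) ≤ Real.exp 2 * q ^ m := by
  set β := -Real.log q
  have hβ : 0 < β := neg_pos.2 (Real.log_neg hq₀ hq₁)
  have hq : ∀ n : ℕ, q ^ n = Real.exp (-(β * n)) := fun n => by
    rw [← neg_mul, neg_neg, mul_comm, Real.exp_nat_mul, Real.exp_log hq₀]
  have hrpow : ∀ {ε : ℝ}, 0 < ε → ∀ n : ℕ, ε ^ (β * n - 1) = ε ^ (-1 : ℝ) * (ε ^ β) ^ n :=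
    fun hε n => by
      rw [← Real.rpow_natCast, ← Real.rpow_mul hε.le, ← Real.rpow_add hε]
      ring_nf
  -- `s ε` sums the terms `u n ε` for which `ε` is already small enough to see their bound.
  obtain ⟨M, hM, hMu⟩ := exists_tendsto_atTop_forall_lt_of_eventually
    (fun n ε => N ≤ n → ‖u n ε‖ ≤ ε ^ (β * n - 1)) fun n =>
      eventually_imp_distrib_left.2 fun hn =>
        boundedByRpow_of_sharpNorm_le (hu n) ((hN n hn).trans_eq (hq n)) (sub_one_lt _)
  set s : ℝ → E := fun ε => ∑ n ∈ Finset.range (M ε), u n ε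
  have htail : ∀ m ≥ N,
      BoundedByRpow (fun ε => (∑ n ∈ Finset.range m, u n ε) - s ε) (β * m - 2) := by
    intro m hm
    filter_upwards [hM.eventually_ge_atTop m, eventually_mul_rpow_le_rpow 2 hβ,
      eventually_mul_rpow_le_rpow 2 (show β * m - 2 < β * m - 1 by linarith),
      self_mem_nhdsWithin] with ε hmM hβε h2 (hε : 0 < ε)
    rw [Real.rpow_zero] at hβε
    calc ‖(∑ n ∈ Finset.range m, u n ε) - s ε‖ = ‖∑ n ∈ Finset.Ico m (M ε), u n ε‖ := by
          rw [norm_sub_rev, Finset.sum_Ico_eq_sub _ hmM]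
      _ ≤ ∑ n ∈ Finset.Ico m (M ε), ε ^ (-1 : ℝ) * (ε ^ β) ^ n := by
          refine norm_sum_le_of_le _ fun n hn => ?_
          rw [← hrpow hε]
          exact hMu ε n (Finset.mem_Ico.1 hn).2 (hm.trans (Finset.mem_Ico.1 hn).1)
      _ ≤ ε ^ (-1 : ℝ) * (2 * (ε ^ β) ^ m) := by
          rw [← Finset.mul_sum]
          gcongr
          exact sum_Ico_pow_le_two_mul (by positivity) (by linarith) m (M ε)
      _ = 2 * ε ^ (β * m - 1) := by rw [hrpow hε]; ring
      _ ≤ ε ^ (β * m - 2) := h2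
  have hs : Moderate s := by
    simpa using (Moderate.finset_sum (s := Finset.range N) fun n _ => hu n).sub
      (moderate_iff_exists_boundedByRpow.2 ⟨_, htail N le_rfl⟩)
  refine ⟨s, hs, fun m hm => ?_⟩
  calc _ ≤ Real.exp (-(β * m - 2)) := sharpNorm_le_of_boundedByRpow (htail m hm)
    _ = Real.exp 2 * q ^ m := by rw [hq, ← Real.exp_add]; ring_nf

theorem eventually_lt_pow_of_limsup_lt {x : ℕ → ℝ} (hx : ∀ n, 0 ≤ x n) {ρ : ℝ}
    (h : limsup (fun n => ENNReal.ofReal (x n ^ (1 / (n : ℝ)))) atTop < ENNReal.ofReal ρ) :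
    ∀ᶠ n in atTop, x n < ρ ^ n := by
  filter_upwards [eventually_lt_of_limsup_lt h, eventually_ge_atTop 1] with n hn hn1
  obtain ⟨hn, hρ⟩ := ENNReal.ofReal_lt_ofReal_iff'.1 hn
  rwa [one_div, Real.rpow_inv_lt_iff_of_pos (hx n) hρ.le (by positivity), Real.rpow_natCast] at hn

theorem frequently_pow_lt_of_lt_limsup {x : ℕ → ℝ} (hx : ∀ n, 0 ≤ x n) {ρ : ℝ} (hρ : 0 ≤ ρ)
    (h : ENNReal.ofReal ρ < limsup (fun n => ENNReal.ofReal (x n ^ (1 / (n : ℝ)))) atTop) :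
    ∃ᶠ n in atTop, ρ ^ n < x n := by
  refine ((frequently_lt_of_lt_limsup (by isBoundedDefault) h).and_eventually
    (eventually_ge_atTop 1)).mono fun n ⟨hn, hn1⟩ => ?_
  rwa [ENNReal.ofReal_lt_ofReal_iff_of_nonneg hρ, one_div,
    Real.lt_rpow_inv_iff_of_pos hρ (hx n) (by positivity), Real.rpow_natCast] at hn

theorem exists_lt_one_sharpNorm_mul_pow_le {a : ℕ → ℝ → ℂ} {r : ℝ} (hr : 0 ≤ r)
    (h : ENNReal.ofReal r < convRadius a) :
    ∃ q, 0 < q ∧ q < 1 ∧ ∃ N, ∀ n ≥ N, sharpNorm (a n) * r ^ n ≤ q ^ n := by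
  rw [convRadius, ENNReal.lt_inv_iff_lt_inv] at h
  obtain ⟨ρ, hρ, hρL, hρr⟩ := ENNReal.lt_iff_exists_real_btwn.1 h
  have hρr : ρ * r < 1 := by
    rw [← ENNReal.ofReal_lt_one, ENNReal.ofReal_mul hρ]
    exact ENNReal.mul_lt_of_lt_div (by rwa [← one_div] at hρr)
  obtain ⟨N, hN⟩ :=
    (eventually_lt_pow_of_limsup_lt (fun n => sharpNorm_nonneg _) hρL).exists_forall_of_atTop
  refine ⟨max (ρ * r) (1 / 2), by positivity, max_lt hρr (by norm_num), N, fun n hn => ?_⟩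
  calc sharpNorm (a n) * r ^ n ≤ ρ ^ n * r ^ n := by gcongr; exact (hN n hn).le
    _ = (ρ * r) ^ n := (mul_pow _ _ _).symm
    _ ≤ max (ρ * r) (1 / 2) ^ n := pow_le_pow_left₀ (by positivity) (le_max_left _ _) n

theorem exists_powerSeries_sharpNorm_sub_le {R : Type*} [SeminormedRing R] [NormOneClass R]
    {a : ℕ → ℝ → R} (ha : ∀ n, Moderate (a n)) {r q : ℝ} (hq₀ : 0 < q) (hq₁ : q < 1) {N : ℕ}
    (hN : ∀ n ≥ N, sharpNorm (a n) * r ^ n ≤ q ^ n) :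
    ∃ s : (ℝ → R) → ℝ → R, ∀ z, Moderate z → sharpNorm z ≤ r → Moderate (s z) ∧ ∀ m ≥ N,
      sharpNorm (fun ε => (∑ n ∈ Finset.range m, a n ε * z ε ^ n) - s z ε)
        ≤ Real.exp 2 * q ^ m := by
  have hsum : ∀ z, Moderate z → sharpNorm z ≤ r → ∃ s, Moderate s ∧ ∀ m ≥ N,
      sharpNorm (fun ε => (∑ n ∈ Finset.range m, a n ε * z ε ^ n) - s ε)
        ≤ Real.exp 2 * q ^ m := by
    intro z hz hzr
    refine exists_moderate_sharpNorm_sum_sub_le (fun n => (ha n).mul (hz.pow n)) hq₀ hq₁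
      fun n hn => ?_
    calc sharpNorm (fun ε => a n ε * z ε ^ n) ≤ sharpNorm (a n) * sharpNorm z ^ n :=
          (sharpNorm_mul_le (ha n) (hz.pow n)).trans
            (mul_le_mul_of_nonneg_left (sharpNorm_pow_le hz n) (sharpNorm_nonneg _))
      _ ≤ sharpNorm (a n) * r ^ n := by gcongr <;> exact sharpNorm_nonneg _
      _ ≤ q ^ n := hN n hn
  choose! s hs using hsum
  exact ⟨s, hs⟩

theorem not_exists_sharpHasSum_of_frequently {R : Type*} [SeminormedCommRing R] [NormOneClass R]
    {a : ℕ → ℝ → R} (ha : ∀ n, Moderate (a n)) {z w : ℝ → R} (hz : Moderate z)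
    (hw : Moderate w) (hzw : Negligible fun ε => z ε * w ε - 1) {ρ : ℝ} (hwρ : sharpNorm w < ρ)
    (hfreq : ∃ᶠ n in atTop, ρ ^ n < sharpNorm (a n)) :
    ¬ ∃ s, Moderate s ∧ SharpHasSum (fun n ε => a n ε * z ε ^ n) s := by
  rintro ⟨s, hs, hsum⟩
  have hsmall := (hsum.tendsto_sharpNorm_zero (fun n => (ha n).mul (hz.pow n)) hs).eventually
    (gt_mem_nhds one_pos)
  obtain ⟨n, hbig, hsmall⟩ := (hfreq.and_eventually hsmall).exists
  have hle := sharpNorm_le_sharpNorm_mul_pow_mul_pow (ha n) hz hw hzw n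
  have hwn : sharpNorm w ^ n ≤ ρ ^ n := pow_le_pow_left₀ (sharpNorm_nonneg w) hwρ.le n
  have hρn : 0 < ρ ^ n := pow_pos ((sharpNorm_nonneg w).trans_lt hwρ) n
  nlinarith [sharpNorm_nonneg fun ε => a n ε * z ε ^ n]

theorem exists_powerSeries_sharpHasSum_uniformOn_ball {a : ℕ → ℝ → ℂ} (ha : ∀ n, Moderate (a n))
    {r : ℝ} (hr : 0 ≤ r) (hR : ENNReal.ofReal r < convRadius a) :
    ∃ s : (ℝ → ℂ) → ℝ → ℂ,
      (∀ z, Moderate z → sharpNorm z ≤ r →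
        Moderate (s z) ∧ SharpHasSum (fun n ε => a n ε * z ε ^ n) (s z)) ∧
      ∀ δ : ℝ, 0 < δ → ∃ M : ℕ, ∀ m ≥ M, ∀ z : ℝ → ℂ, Moderate z → sharpNorm z ≤ r →
        sharpNorm (fun ε => (∑ n ∈ Finset.range m, a n ε * z ε ^ n) - s z ε) < δ := by
  obtain ⟨q, hq₀, hq₁, N, hN⟩ := exists_lt_one_sharpNorm_mul_pow_le hr hR
  obtain ⟨s, hs⟩ := exists_powerSeries_sharpNorm_sub_le ha hq₀ hq₁ hN
  have hgeom : Tendsto (fun m => Real.exp 2 * q ^ m) atTop (𝓝 0) := by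
    simpa using (tendsto_pow_atTop_nhds_zero_of_lt_one hq₀.le hq₁).const_mul (Real.exp 2)
  refine ⟨s, fun z hz hzr => ⟨(hs z hz hzr).1, squeeze_zero' (.of_forall fun _ =>
    sharpNorm_nonneg _) (eventually_atTop.2 ⟨N, (hs z hz hzr).2⟩) hgeom⟩, fun δ hδ => ?_⟩
  obtain ⟨M, hM⟩ := eventually_atTop.1
    ((hgeom.eventually (gt_mem_nhds hδ)).and (eventually_ge_atTop N))
  exact ⟨M, fun m hm z hz hzr => ((hs z hz hzr).2 m (hM m hm).2).trans_lt (hM m hm).1⟩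

/-- Lemma 4.15: convergence of power series with coefficients in `C̃`. -/
theorem power_series_convergence_radius (a : ℕ → ℝ → ℂ) (ha : ∀ n, Moderate (a n)) :
    -- convergence for ‖z̃‖ < R
    (∀ z : ℝ → ℂ, Moderate z → ENNReal.ofReal (sharpNorm z) < convRadius a →
      ∃ s : ℝ → ℂ, Moderate s ∧
        Filter.Tendsto
          (fun m => sharpNorm fun ε => (∑ n ∈ Finset.range m, a n ε * z ε ^ n) - s ε)
          Filter.atTop (nhds 0)) ∧
    -- divergence for invertible z̃ with ‖z̃⁻¹‖ < 1/R
    (∀ z w : ℝ → ℂ, Moderate z → Moderate w →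
      (Negligible fun ε => z ε * w ε - 1) →
      ENNReal.ofReal (sharpNorm w) < (convRadius a)⁻¹ →
      ¬ ∃ s : ℝ → ℂ, Moderate s ∧
        Filter.Tendsto
          (fun m => sharpNorm fun ε => (∑ n ∈ Finset.range m, a n ε * z ε ^ n) - s ε)
          Filter.atTop (nhds 0)) ∧
    -- uniform convergence on every ball of radius r < R
    (∀ r : ℝ, 0 ≤ r → ENNReal.ofReal r < convRadius a →
      ∃ s : (ℝ → ℂ) → ℝ → ℂ,
        (∀ z : ℝ → ℂ, Moderate z → sharpNorm z ≤ r → Moderate (s z) ∧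
          Filter.Tendsto
            (fun m => sharpNorm fun ε => (∑ n ∈ Finset.range m, a n ε * z ε ^ n) - s z ε)
            Filter.atTop (nhds 0)) ∧
        ∀ δ : ℝ, 0 < δ → ∃ M : ℕ, ∀ m ≥ M, ∀ z : ℝ → ℂ, Moderate z → sharpNorm z ≤ r →
          sharpNorm (fun ε => (∑ n ∈ Finset.range m, a n ε * z ε ^ n) - s z ε) < δ) := by
  refine ⟨fun z hz hR => ?_, fun z w hz hw hzw hwR => ?_, fun r hr hR =>
    exists_powerSeries_sharpHasSum_uniformOn_ball ha hr hR⟩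
  · obtain ⟨s, hs, -⟩ := exists_powerSeries_sharpHasSum_uniformOn_ball ha (sharpNorm_nonneg z) hR
    exact ⟨s z, hs z hz le_rfl⟩
  · rw [convRadius, inv_inv] at hwR
    obtain ⟨ρ, hρ, hwρ, hρL⟩ := ENNReal.lt_iff_exists_real_btwn.1 hwR
    exact not_exists_sharpHasSum_of_frequently ha hz hw hzw
      (ENNReal.ofReal_lt_ofReal_iff'.1 hwρ).1
      (frequently_pow_lt_of_lt_limsup (fun n => sharpNorm_nonneg _) hρ hρL)
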